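/- arXiv:1111.1459 — 3 statements merged into one kernel-verified Lean document; each statement's English description precedes it below -/
import Mathlib

section
/- If r is a balanced two-state rotor type, then b(UU(r)) + b(DD(r)) ≥ 2·b(r), where the balance coefficients of UU(r) and DD(r) are computed regarding them as periodic two-state sequences with period length |r|. -/
open scoped Classical

/-! ### Periodic sequences and rotor types

A rotor type is modelled as a function `f : ℕ → ℕ` (0-based reindexing of the paper's
sequence `r(1), r(2), …`, so the paper's `r(k)` is `f (k-1)`), together with its minimal
period `n`.  The states of the rotor are the values occurring in one period. -/

def IsPeriodicWith {α : Type*} (f : ℕ → α) (n : ℕ) : Prop := ∀ k, f (k + n) = f k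

def IsMinimalPeriod {α : Type*} (f : ℕ → α) (n : ℕ) : Prop :=
  0 < n ∧ IsPeriodicWith f n ∧ ∀ m, 0 < m → IsPeriodicWith f m → n ≤ m

noncomputable def minPeriod {α : Type*} (f : ℕ → α) : ℕ :=
  sInf {n | 0 < n ∧ IsPeriodicWith f n}

/-- `f` (with period `n`) reads the same forwards and backwards:
`r(k) = r(n+1-k)` for `1 ≤ k ≤ n`, written 0-based. -/
def Palindromic (f : ℕ → ℕ) (n : ℕ) : Prop := ∀ k < n, f k = f (n - 1 - k)

/-- `f` (with period `n`) is block-repetitive with block length `m`. -/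
def BlockRepetitive (f : ℕ → ℕ) (n m : ℕ) : Prop :=
  2 ≤ m ∧ m ∣ n ∧ ∀ k : ℕ, ∀ j < m, f (k * m + j) = f (k * m)

def Boppy (f : ℕ → ℕ) (n : ℕ) : Prop := Palindromic f n ∨ ∃ m, BlockRepetitive f n m

/-- The set of states of a rotor type of period `n`. -/
def states (f : ℕ → ℕ) (n : ℕ) : Finset ℕ := (Finset.range n).image f

/-- Number of occurrences of the state `v` among the first `n` terms of `f`. -/
noncomputable def countIn (f : ℕ → ℕ) (n v : ℕ) : ℕ :=
  ((Finset.range n).filter (fun k => f k = v)).card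

/-- Merging reduction `s → s'`: replace every occurrence of `s` by `s'`. -/
def merge (f : ℕ → ℕ) (s s' : ℕ) : ℕ → ℕ := fun k => if f k = s then s' else f k

/-- Destructive reduction `x(s)`: delete every occurrence of `s` and re-index. -/
noncomputable def destroy (f : ℕ → ℕ) (s : ℕ) : ℕ → ℕ :=
  fun k => f (Nat.nth (fun i => f i ≠ s) k)

/-- A two-state rotor type with states `1` and `2`, both occurring. -/
def TwoState (f : ℕ → ℕ) : Prop :=
  (∀ k, f k = 1 ∨ f k = 2) ∧ (∃ k, f k = 1) ∧ (∃ k, f k = 2)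

/-! ### The compressor

The particle's trajectory alternates: at step `t` (0-based) the source `v1` fires its
`(t+1)`-st term `f t`; if it is `1`, the particle moves to `v2`, whose firing count so far
is the number of `1`'s among `f 0, …, f (t-1)`; if it is `2`, it moves to `v3` similarly.
From `v2`/`v3` the particle either returns to the source (no target hit) or hits target
`4`/`5` and restarts at the source.  `X Y : Bool` encode the variation, `true` = `U`:
at `v2` state `1` routes up to `v1` iff `X = true`; at `v3` state `1` routes up iff
`Y = true`. -/

noncomputable def hitAt (X Y : Bool) (r : ℕ → ℕ) (t : ℕ) : Option ℕ :=
  if r t = 1 then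
    (if decide (r (countIn r t 1) = 1) ≠ X then some 4 else none)
  else
    (if decide (r (countIn r t 2) = 1) ≠ Y then some 5 else none)

/-- The hitting sequence of the compressor variation `XY` on rotor type `r`:
the subsequence of recorded targets (`4` or `5`), in order. -/
noncomputable def compSeq (X Y : Bool) (r : ℕ → ℕ) : ℕ → ℕ :=
  fun k => (hitAt X Y r (Nat.nth (fun t => (hitAt X Y r t).isSome = true) k)).getD 4

noncomputable def UUseq (r : ℕ → ℕ) : ℕ → ℕ := compSeq true true r
noncomputable def UDseq (r : ℕ → ℕ) : ℕ → ℕ := compSeq true false r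
noncomputable def DUseq (r : ℕ → ℕ) : ℕ → ℕ := compSeq false true r
noncomputable def DDseq (r : ℕ → ℕ) : ℕ → ℕ := compSeq false false r

/-- The compressor output with targets `4, 5` relabelled as states `1, 2`. -/
noncomputable def compOp (X Y : Bool) (r : ℕ → ℕ) : ℕ → ℕ := fun k => compSeq X Y r k - 3

noncomputable def UUop (r : ℕ → ℕ) : ℕ → ℕ := compOp true true r
noncomputable def UDop (r : ℕ → ℕ) : ℕ → ℕ := compOp true false r
noncomputable def DUop (r : ℕ → ℕ) : ℕ → ℕ := compOp false true r
noncomputable def DDop (r : ℕ → ℕ) : ℕ → ℕ := compOp false false r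

/-- A finite composition of compressor operations (each given by its pair of letters),
with the targets relabelled back to `1, 2` after each application. -/
noncomputable def applyOps (ops : List (Bool × Bool)) (r : ℕ → ℕ) : ℕ → ℕ :=
  ops.foldl (fun s o => compOp o.1 o.2 s) r

/-- The hitting sequence of the depth-2 binary tree network `BT` on `r`
(targets `1,2,3,4`): every firing of the source produces a hit. -/
noncomputable def BTseq (r : ℕ → ℕ) : ℕ → ℕ :=
  fun t => if r t = 1 then (if r (countIn r t 1) = 1 then 1 else 2)
           else (if r (countIn r t 2) = 1 then 3 else 4)

/-- Two sequences are equivalent if one is obtained from the other by a relabelling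
that is injective on the values of the first (a bijective relabelling of states). -/
def SeqEquiv {α β : Type*} (f : ℕ → α) (g : ℕ → β) : Prop :=
  ∃ ρ : α → β, (∀ k, ρ (f k) = g k) ∧ ∀ k l, ρ (f k) = ρ (f l) → f k = f l

/-- Every aligned block of length `m` of `f` contains states `1` and `2` equally often
(`m = 2n` gives `2n`-balance). -/
def BalancedBlocks (f : ℕ → ℕ) (m : ℕ) : Prop :=
  ∀ k : ℕ, countIn (fun j => f (k * m + j)) m 1 = countIn (fun j => f (k * m + j)) m 2

/-- `f ≡_m g` : some relabelling of `f` (injective on states) has the same multiset of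
entries as `g` on every aligned block of length `m`. -/
def BlockEquiv (f g : ℕ → ℕ) (m : ℕ) : Prop :=
  ∃ ρ : ℕ → ℕ, (∀ k l, ρ (f k) = ρ (f l) ↔ f k = f l) ∧
    ∀ k : ℕ, (Multiset.range m).map (fun j => ρ (f (k * m + j))) =
             (Multiset.range m).map (fun j => g (k * m + j))

/-- `L` is a balanced run decomposition of one period (of length `p`) of `f`:
a list of positive run lengths summing to `p` such that each corresponding
consecutive run contains `1` and `2` equally often. -/
noncomputable def IsBRD (f : ℕ → ℕ) (p : ℕ) (L : List ℕ) : Prop :=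
  L.sum = p ∧ (∀ a ∈ L, 0 < a) ∧
  ∀ i : Fin L.length,
    countIn (fun j => f ((L.take i.1).sum + j)) (L.get i) 1 =
    countIn (fun j => f ((L.take i.1).sum + j)) (L.get i) 2

/-- `L` is a uniform run decomposition of one period (of length `p`) of `f`:
a list of positive run lengths summing to `p` such that each corresponding
consecutive run is constant. -/
def IsURD (f : ℕ → ℕ) (p : ℕ) (L : List ℕ) : Prop :=
  L.sum = p ∧ (∀ a ∈ L, 0 < a) ∧
  ∀ i : Fin L.length, ∀ j < L.get i, f ((L.take i.1).sum + j) = f ((L.take i.1).sum)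

/-- The maximal number of runs in a BRD of `f` (period `p`). -/
noncomputable def maxBRD (f : ℕ → ℕ) (p : ℕ) : ℕ :=
  sSup {m | ∃ L : List ℕ, IsBRD f p L ∧ L.length = m}

/-- The balance coefficient `b(f)` (with respect to period length `p`). -/
noncomputable def balCoeff (f : ℕ → ℕ) (p : ℕ) : ℚ := (maxBRD f p : ℚ) / (p : ℚ)

/-- The type of a run decomposition, as an infinite periodic sequence of run data. -/
def typeSeq (L : List ℕ) : ℕ → ℕ := fun i => L.getD (i % L.length) 0

/-- A BURD rotor: it has a BRD and a URD of the same type, i.e. the `i`-th balanced run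
has length `2·b_i` where `b_i` is the length of the `i`-th uniform run. -/
noncomputable def IsBURD (f : ℕ → ℕ) (p : ℕ) : Prop :=
  ∃ L M : List ℕ, IsBRD f p L ∧ IsURD f p M ∧ ∀ i, typeSeq L i = 2 * typeSeq M i

/-- The ba-frequency `m(f) = 2k/p` of an ab-ba sequence with period length `p`,
where `k` is the number of `21` blocks per period. -/
noncomputable def baFreq (f : ℕ → ℕ) (p : ℕ) : ℚ :=
  (2 * (((Finset.range (p / 2)).filter (fun j => f (2 * j) = 2)).card : ℚ)) / (p : ℚ)

/-! ### Rotor-router networks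

A rotor-router network on a vertex type `V`: a source, a finite set of targets
(outdegree 0), and at every non-target vertex `v` the rotor pattern, recorded by the
sequence `rotor v : ℕ → V` of heads of its successive out-edges.  The underlying digraph
has an edge `v → w` (for non-target `v`) iff `w` occurs in `v`'s rotor pattern. -/

structure RotorNetwork (V : Type) where
  source : V
  target : Finset V
  rotor : V → ℕ → V

namespace RotorNetwork

variable {V : Type} [DecidableEq V]

/-- One step of the particle dynamics on states `(current position, firing counts)`:
at a target, record it and restart at the source; at a non-target vertex `v`, fire the
next term of `v`'s rotor pattern. -/
noncomputable def step (N : RotorNetwork V) (s : V × (V → ℕ)) : V × (V → ℕ) :=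
  if s.1 ∈ N.target then (N.source, s.2)
  else (N.rotor s.1 (s.2 s.1), Function.update s.2 s.1 (s.2 s.1 + 1))

/-- The full trajectory of the particle, started at the source with all rotors fresh. -/
noncomputable def traj (N : RotorNetwork V) : ℕ → V × (V → ℕ)
  | 0 => (N.source, fun _ => 0)
  | t + 1 => N.step (N.traj t)

/-- The hitting sequence: the subsequence of targets visited, in order. -/
noncomputable def hitSeq (N : RotorNetwork V) : ℕ → V :=
  fun k => (N.traj (Nat.nth (fun t => (N.traj t).1 ∈ N.target) k)).1

/-- Adjacency of the underlying digraph. -/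
def adj (N : RotorNetwork V) (v w : V) : Prop :=
  v ∉ N.target ∧ ∃ k, N.rotor v k = w

/-- A valid rotor-router network: the source is not a target, there is at least one
target, and every non-target vertex can reach some target. -/
def Valid (N : RotorNetwork V) : Prop :=
  N.source ∉ N.target ∧ N.target.Nonempty ∧
  ∀ v : V, v ∉ N.target → ∃ t ∈ N.target, Relation.ReflTransGen N.adj v t

/-- The rotor pattern at `v` has type `r`: it is `e ∘ r` for some assignment `e` of
states to out-neighbours. -/
def HasType (N : RotorNetwork V) (v : V) (r : ℕ → ℕ) : Prop :=
  ∃ e : ℕ → V, ∀ k, N.rotor v k = e (r k)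

end RotorNetwork

/-- The alternating rotor type `1, 2, 1, 2, …` of period `2`. -/
def rot12 : ℕ → ℕ := fun k => if k % 2 = 0 then 1 else 2

/-- `r` is universal: every rotor type `r'` is, up to a bijective relabelling of states,
the hitting sequence of some finite rotor-router network all of whose rotors have type `r`. -/
noncomputable def Universal (r : ℕ → ℕ) : Prop :=
  ∀ (r' : ℕ → ℕ) (n' : ℕ), IsMinimalPeriod r' n' →
    ∃ (m : ℕ) (N : RotorNetwork (Fin m)), N.Valid ∧
      (∀ v, v ∉ N.target → N.HasType v r) ∧ SeqEquiv N.hitSeq r'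

/-- The (1-based) position of the `m`-th occurrence of the state `v` in `f`
(`posOf f 1 = f`, `posOf f 2 = g` in the paper's notation; `countIn f · 1 = F`,
`countIn f · 2 = G`). -/
noncomputable def posOf (f : ℕ → ℕ) (v m : ℕ) : ℕ := Nat.nth (fun k => f k = v) (m - 1) + 1

/-!
In both variations the particle leaving the source at its `t`-th firing (0-based) goes to the
successor of the state `r t`, whose rotor then reads `r (countIn r t (r t))`; the firing ends
in a hit iff that reading is `2` (in `UU`) or `1` (in `DD`), and the hit outputs `r t`. So among
the hits of the first `T` firings, the outputs equal to `v` are counted by the `2`s (resp. `1`s)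
among the first `countIn r T v` terms of `r`. A balanced prefix of `r` therefore maps to
balanced prefixes of `UU(r)` and `DD(r)`, and two periods of `r` map to one period of each.

A BRD of `r` with `k` runs is a set of `k + 1` balanced cut points in `[0, p]`; repeating it
gives `2k + 1` cut points in `[0, 2p]`. Their images under the two hit counts are balanced cut
points of `UU(r)` and `DD(r)`, and since every firing is a hit in exactly one variation, each
step between consecutive cuts reaches a new value in at least one of the images. The two images
thus have at least `2k + 2` points in total, i.e. `maxBRD UU(r) + maxBRD DD(r) ≥ 2 maxBRD r`.
-/

open Finset

section countIn

lemma countIn_zero (f : ℕ → ℕ) (v : ℕ) : countIn f 0 v = 0 := rfl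

lemma countIn_succ (f : ℕ → ℕ) (n v : ℕ) :
    countIn f (n + 1) v = countIn f n v + if f n = v then 1 else 0 := by
  unfold countIn
  rw [range_add_one, filter_insert]
  split <;> simp [card_insert_of_notMem]

lemma countIn_add (f : ℕ → ℕ) (a b v : ℕ) :
    countIn f (a + b) v = countIn f a v + countIn (fun j => f (a + j)) b v := by
  induction b with
  | zero => rfl
  | succ b ih => rw [← Nat.add_assoc, countIn_succ, ih, countIn_succ, Nat.add_assoc]

lemma countIn_add_period {f : ℕ → ℕ} {p : ℕ} (hp : IsPeriodicWith f p) (t v : ℕ) :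
    countIn f (t + p) v = countIn f t v + countIn f p v := by
  rw [Nat.add_comm, countIn_add, Nat.add_comm]
  congr 1
  unfold countIn
  simp only [Nat.add_comm p, hp _]

lemma countIn_one_add_countIn_two {f : ℕ → ℕ} (h : ∀ k, f k = 1 ∨ f k = 2) (n : ℕ) :
    countIn f n 1 + countIn f n 2 = n := by
  induction n with
  | zero => rfl
  | succ n ih =>
    rw [countIn_succ, countIn_succ]
    rcases h n with h1 | h1 <;> simp [h1] <;> omega

end countIn

section BalancedCuts

variable {f : ℕ → ℕ}

lemma isBRD_nil : IsBRD f 0 [] := ⟨rfl, by simp, fun i => i.elim0⟩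

lemma isBRD_append_singleton_iff {P a : ℕ} {L : List ℕ} :
    IsBRD f (P + a) (L ++ [a]) ↔ IsBRD f P L ∧ 0 < a ∧
      countIn (fun j => f (P + j)) a 1 = countIn (fun j => f (P + j)) a 2 := by
  have hrun : ∀ i (hi : i < L.length),
      (L ++ [a]).take i = L.take i ∧ (L ++ [a])[i]'(by simp; omega) = L[i] :=
    fun i hi => ⟨List.take_append_of_le_length hi.le, List.getElem_append_left hi⟩
  constructor
  · rintro ⟨hsum, hpos, hbal⟩
    have hL : L.sum = P := by simpa using hsum
    refine ⟨⟨hL, fun b hb => hpos b (by simp [hb]), fun i => ?_⟩, hpos a (by simp), ?_⟩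
    · simpa [(hrun i i.2).1, (hrun i i.2).2] using hbal ⟨i, by simp⟩
    · simpa [hL] using hbal ⟨L.length, by simp⟩
  · rintro ⟨⟨hsum, hpos, hbal⟩, ha, hlast⟩
    refine ⟨by simp [hsum], fun b hb => ?_, fun ⟨i, hi⟩ => ?_⟩
    · rcases List.mem_append.1 hb with hb | hb
      · exact hpos b hb
      · exact List.mem_singleton.1 hb ▸ ha
    · rcases lt_or_eq_of_le (Nat.lt_succ_iff.1 (by simpa using hi)) with hi | rfl
      · simpa [(hrun i hi).1, (hrun i hi).2] using hbal ⟨i, hi⟩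
      · simpa [hsum] using hlast

lemma balanced_shift_iff {a b : ℕ} (ha : countIn f a 1 = countIn f a 2) :
    countIn (fun j => f (a + j)) b 1 = countIn (fun j => f (a + j)) b 2 ↔
      countIn f (a + b) 1 = countIn f (a + b) 2 := by
  rw [countIn_add, countIn_add]
  omega

/-- Consecutive cut points bound the runs of a BRD, so BRDs with `k` runs correspond to
balanced cut sets of size `k + 1`. -/
def BalancedCuts (f : ℕ → ℕ) (P : ℕ) (S : Finset ℕ) : Prop :=
  0 ∈ S ∧ P ∈ S ∧ ∀ s ∈ S, s ≤ P ∧ countIn f s 1 = countIn f s 2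

theorem IsBRD.exists_balancedCuts {P : ℕ} {L : List ℕ} (h : IsBRD f P L) :
    ∃ S, BalancedCuts f P S ∧ S.card = L.length + 1 := by
  induction L using List.reverseRecOn generalizing P with
  | nil =>
    obtain rfl : P = 0 := h.1.symm
    exact ⟨{0}, ⟨by simp, by simp, by simp [countIn_zero]⟩, rfl⟩
  | append_singleton L a ih =>
    obtain rfl : P = L.sum + a := by simpa using h.1.symm
    obtain ⟨hL, ha, hrun⟩ := isBRD_append_singleton_iff.1 h
    obtain ⟨S, ⟨h0, hm, hS⟩, hcard⟩ := ih hL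
    have hlast := (balanced_shift_iff (hS _ hm).2).1 hrun
    have hnew : L.sum + a ∉ S := fun hmem => by have := (hS _ hmem).1; omega
    refine ⟨insert (L.sum + a) S, ⟨mem_insert_of_mem h0, mem_insert_self _ _, ?_⟩, ?_⟩
    · simp only [mem_insert, forall_eq_or_imp]
      exact ⟨⟨le_rfl, hlast⟩, fun s hs => ⟨by have := (hS s hs).1; omega, (hS s hs).2⟩⟩
    · simp [card_insert_of_notMem hnew, hcard]

theorem BalancedCuts.exists_isBRD {P : ℕ} {S : Finset ℕ} (h : BalancedCuts f P S) :
    ∃ L, IsBRD f P L ∧ L.length + 1 = S.card := by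
  induction S using Finset.induction_on_max generalizing P with
  | empty => exact absurd h.1 (notMem_empty 0)
  | insert x S hlt ih =>
    obtain ⟨h0, hP, hS⟩ := h
    obtain rfl : P = x := by
      rcases mem_insert.1 hP with hP | hP
      · exact hP
      · have := hlt P hP; have := (hS x (mem_insert_self x S)).1; omega
    rcases S.eq_empty_or_nonempty with rfl | hne
    · obtain rfl : P = 0 := by simpa [eq_comm] using h0
      exact ⟨[], isBRD_nil, rfl⟩
    set m := S.max' hne
    have hmP : m < P := hlt m (S.max'_mem hne)
    have h0S : 0 ∈ S := (mem_insert.1 h0).resolve_left (by omega)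
    obtain ⟨L, hL, hcard⟩ := ih (P := m) ⟨h0S, S.max'_mem hne,
      fun s hs => ⟨S.le_max' s hs, (hS s (mem_insert_of_mem hs)).2⟩⟩
    have hrun := (balanced_shift_iff (b := P - m) (hS m (mem_insert_of_mem (S.max'_mem hne))).2).2
      (by rw [Nat.add_sub_cancel' hmP.le]; exact (hS P (mem_insert_self P S)).2)
    refine ⟨L ++ [P - m], ?_, ?_⟩
    · have := isBRD_append_singleton_iff.2 ⟨hL, Nat.sub_pos_of_lt hmP, hrun⟩
      rwa [Nat.add_sub_cancel' hmP.le] at this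
    · rw [card_insert_of_notMem fun hmem => (hlt P hmem).false, ← hcard]
      simp

lemma bddAbove_isBRD_lengths (f : ℕ → ℕ) (P : ℕ) :
    BddAbove {m | ∃ L, IsBRD f P L ∧ L.length = m} :=
  ⟨P, by
    rintro _ ⟨L, hL, rfl⟩
    exact hL.1 ▸ L.length_le_sum_of_one_le hL.2.1⟩

lemma BalancedCuts.card_le_maxBRD_succ {P : ℕ} {S : Finset ℕ} (h : BalancedCuts f P S) :
    S.card ≤ maxBRD f P + 1 := by
  obtain ⟨L, hL, hcard⟩ := h.exists_isBRD
  have : L.length ≤ maxBRD f P := le_csSup (bddAbove_isBRD_lengths f P) ⟨L, hL, rfl⟩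
  omega

lemma exists_balancedCuts_card_eq_maxBRD_succ {P : ℕ} (h : ∃ S, BalancedCuts f P S) :
    ∃ S, BalancedCuts f P S ∧ S.card = maxBRD f P + 1 := by
  obtain ⟨S, hS⟩ := h
  obtain ⟨L₀, hL₀, -⟩ := hS.exists_isBRD
  obtain ⟨L, hL, hlen⟩ := Nat.sSup_mem (s := {m | ∃ L, IsBRD f P L ∧ L.length = m})
    ⟨L₀.length, L₀, hL₀, rfl⟩ (bddAbove_isBRD_lengths f P)
  rw [maxBRD, ← hlen]
  exact hL.exists_balancedCuts

lemma BalancedCuts.exists_two_periods {P : ℕ} {S : Finset ℕ} (hper : IsPeriodicWith f P)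
    (h : BalancedCuts f P S) :
    ∃ S', BalancedCuts f (P + P) S' ∧ S'.card + 1 = 2 * S.card := by
  obtain ⟨h0, hP, hS⟩ := h
  have hinter : S ∩ S.image (· + P) = {P} := by
    ext s
    simp only [mem_inter, mem_image, mem_singleton]
    constructor
    · rintro ⟨hs, t, -, rfl⟩
      have := (hS _ hs).1
      omega
    · intro hs
      rw [hs]
      exact ⟨hP, 0, h0, Nat.zero_add P⟩
  refine ⟨S ∪ S.image (· + P), ⟨mem_union_left _ h0, mem_union_right _ (mem_image_of_mem _ hP),
    ?_⟩, ?_⟩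
  · intro s hs
    rcases mem_union.1 hs with hs | hs
    · exact ⟨(hS s hs).1.trans (Nat.le_add_right P P), (hS s hs).2⟩
    · obtain ⟨t, ht, rfl⟩ := mem_image.1 hs
      refine ⟨Nat.add_le_add_right (hS t ht).1 P, ?_⟩
      rw [countIn_add_period hper, countIn_add_period hper, (hS t ht).2, (hS P hP).2]
  · have := card_union_add_card_inter S (S.image (· + P))
    rw [hinter, card_singleton, card_image_of_injective _ (add_left_injective P)] at this
    omega

lemma BalancedCuts.image {g u : ℕ → ℕ} {P : ℕ} {S : Finset ℕ} (hu : Monotone u) (hu0 : u 0 = 0)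
    (hbal : ∀ s, countIn f s 1 = countIn f s 2 → countIn g (u s) 1 = countIn g (u s) 2)
    (h : BalancedCuts f P S) : BalancedCuts g (u P) (S.image u) := by
  obtain ⟨h0, hP, hS⟩ := h
  refine ⟨hu0 ▸ mem_image_of_mem u h0, mem_image_of_mem u hP, ?_⟩
  simp only [mem_image, forall_exists_index, and_imp, forall_apply_eq_imp_iff₂]
  exact fun s hs => ⟨hu (hS s hs).1, hbal s (hS s hs).2⟩

end BalancedCuts

/-- Every step up the chain `S` moves at least one of the two coordinates to a new value. -/
lemma card_add_one_le_card_image_add_card_image {u d : ℕ → ℕ} (hu : Monotone u)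
    (hd : Monotone d) (hud : StrictMono fun x => u x + d x) {S : Finset ℕ} (hS : S.Nonempty) :
    S.card + 1 ≤ (S.image u).card + (S.image d).card := by
  induction S using Finset.induction_on_max with
  | empty => exact absurd hS not_nonempty_empty
  | insert x S hlt ih =>
    rcases S.eq_empty_or_nonempty with rfl | hne
    · simp
    have hm : u (S.max' hne) + d (S.max' hne) < u x + d x := hud (hlt _ (S.max'_mem hne))
    have hx : x ∉ S := fun hx => (hlt x hx).false
    have key : u x ∉ S.image u ∨ d x ∉ S.image d := by
      by_contra! h
      obtain ⟨s, hs, hsu⟩ := mem_image.1 h.1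
      obtain ⟨t, ht, htd⟩ := mem_image.1 h.2
      have := hu (S.le_max' s hs)
      have := hd (S.le_max' t ht)
      omega
    rw [card_insert_of_notMem hx, image_insert, image_insert]
    have := ih hne
    rcases key with hnew | hnew
    · rw [card_insert_of_notMem hnew]
      have := card_le_card (subset_insert (d x) (S.image d))
      omega
    · rw [card_insert_of_notMem hnew]
      have := card_le_card (subset_insert (u x) (S.image u))
      omega

section Compressor

lemma countIn_nth_count (f : ℕ → ℕ) (q : ℕ → Prop) [DecidablePred q] (T v : ℕ) :
    countIn (fun k => f (Nat.nth q k)) (Nat.count q T) v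
      = Nat.count (fun t => q t ∧ f t = v) T := by
  induction T with
  | zero => rfl
  | succ T ih =>
    rw [Nat.count_succ, Nat.count_succ, ← ih]
    by_cases hq : q T
    · simp [hq, countIn_succ, Nat.nth_count hq]
    · simp [hq]

lemma count_and_add_count_and {r : ℕ → ℕ} (htwo : ∀ k, r k = 1 ∨ r k = 2) (P : ℕ → Prop)
    [DecidablePred P] (T : ℕ) :
    Nat.count (fun t => r t = 1 ∧ P t) T + Nat.count (fun t => r t = 2 ∧ P t) T
      = Nat.count P T := by
  induction T with
  | zero => rfl
  | succ T ih =>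
    simp only [Nat.count_succ]
    rcases htwo T with h | h <;> by_cases hP : P T <;> simp [h, hP] <;> omega

lemma count_eq_countIn_countIn (r : ℕ → ℕ) (v w T : ℕ) :
    Nat.count (fun t => r t = v ∧ r (countIn r t v) = w) T = countIn r (countIn r T v) w := by
  induction T with
  | zero => rfl
  | succ T ih =>
    rw [Nat.count_succ, ih, countIn_succ]
    by_cases hv : r T = v
    · simp [hv, countIn_succ]
    · simp [hv]

noncomputable def hitCount (X Y : Bool) (r : ℕ → ℕ) (T : ℕ) : ℕ :=
  Nat.count (fun t => (hitAt X Y r t).isSome) T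

variable {r : ℕ → ℕ}

lemma isSome_hitAt_iff (htwo : ∀ k, r k = 1 ∨ r k = 2) (b : Bool) (t : ℕ) :
    (hitAt b b r t).isSome ↔ r (countIn r t (r t)) = cond b 2 1 := by
  unfold hitAt
  rcases htwo t with h | h <;> rcases htwo (countIn r t (r t)) with h' | h' <;> cases b <;>
    simp_all

lemma hitAt_getD_sub_three (htwo : ∀ k, r k = 1 ∨ r k = 2) {X Y : Bool} {t : ℕ}
    (h : (hitAt X Y r t).isSome) :
    (hitAt X Y r t).getD 4 - 3 = r t := by
  unfold hitAt at h ⊢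
  rcases htwo t with h1 | h1 <;> simp only [h1] at h ⊢ <;> split_ifs at h ⊢ <;> simp_all

lemma countIn_compOp_hitCount (htwo : ∀ k, r k = 1 ∨ r k = 2) (b : Bool) (T v : ℕ) :
    countIn (compOp b b r) (hitCount b b r T) v = countIn r (countIn r T v) (cond b 2 1) := by
  rw [← count_eq_countIn_countIn]
  refine (countIn_nth_count (fun t => (hitAt b b r t).getD 4 - 3)
    (fun t => (hitAt b b r t).isSome) T v).trans ?_
  congr 1
  funext t
  refine propext ⟨fun ⟨hit, hv⟩ => ?_, fun ⟨hv, hw⟩ => ?_⟩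
  · rw [hitAt_getD_sub_three htwo hit] at hv
    exact ⟨hv, hv ▸ (isSome_hitAt_iff htwo b t).1 hit⟩
  · have hit := (isSome_hitAt_iff htwo b t).2 (hv ▸ hw)
    exact ⟨hit, (hitAt_getD_sub_three htwo hit).trans hv⟩

lemma hitCount_eq_add (htwo : ∀ k, r k = 1 ∨ r k = 2) (b : Bool) (T : ℕ) :
    hitCount b b r T
      = countIn r (countIn r T 1) (cond b 2 1) + countIn r (countIn r T 2) (cond b 2 1) := by
  rw [← count_eq_countIn_countIn, ← count_eq_countIn_countIn, hitCount,
    ← count_and_add_count_and htwo]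
  congr 2 <;> funext t <;> refine propext (and_congr_right fun hv => ?_) <;>
    rw [isSome_hitAt_iff htwo, hv]

lemma hitCount_true_add_hitCount_false (htwo : ∀ k, r k = 1 ∨ r k = 2) (T : ℕ) :
    hitCount true true r T + hitCount false false r T = T := by
  induction T with
  | zero => rfl
  | succ T ih =>
    simp only [hitCount, Nat.count_succ, isSome_hitAt_iff htwo, cond_true, cond_false] at ih ⊢
    rcases htwo (countIn r T (r T)) with h | h <;> simp [h] <;> omega

lemma hitCount_two_periods (htwo : ∀ k, r k = 1 ∨ r k = 2) {p : ℕ}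
    (hper : IsPeriodicWith r p) (hbal : countIn r p 1 = countIn r p 2) (b : Bool) :
    hitCount b b r (p + p) = p := by
  have hp := countIn_one_add_countIn_two htwo p
  have h1 : countIn r (p + p) 1 = p := by rw [countIn_add_period hper]; omega
  have h2 : countIn r (p + p) 2 = p := by rw [countIn_add_period hper]; omega
  rw [hitCount_eq_add htwo, h1, h2]
  cases b <;> simp <;> omega

theorem BalancedCuts.compOp (htwo : ∀ k, r k = 1 ∨ r k = 2) {p : ℕ} (hper : IsPeriodicWith r p)
    (hbal : countIn r p 1 = countIn r p 2) (b : Bool) {S : Finset ℕ}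
    (h : BalancedCuts r (p + p) S) :
    BalancedCuts (compOp b b r) p (S.image (hitCount b b r)) := by
  rw [← hitCount_two_periods htwo hper hbal b]
  refine h.image (Nat.count_monotone _) rfl fun s hs => ?_
  rw [countIn_compOp_hitCount htwo, countIn_compOp_hitCount htwo, hs]

end Compressor

/-- For a balanced two-state rotor type `r` of period `p`,
`b(UU(r)) + b(DD(r)) ≥ 2·b(r)`, the balance coefficients of `UU(r)` and `DD(r)` being
computed with respect to period length `p` (targets identified with `1, 2`). -/
theorem statement10 (r : ℕ → ℕ) (p : ℕ) (h2 : TwoState r) (hmin : IsMinimalPeriod r p)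
    (hbal : countIn r p 1 = countIn r p 2) :
    2 * balCoeff r p ≤ balCoeff (UUop r) p + balCoeff (DDop r) p := by
  obtain ⟨-, hper, -⟩ := hmin
  have htwo := h2.1
  have hcuts : BalancedCuts r p {0, p} := ⟨by simp, by simp, by simp [countIn_zero, hbal]⟩
  obtain ⟨S, hS, hcard⟩ := exists_balancedCuts_card_eq_maxBRD_succ ⟨_, hcuts⟩
  obtain ⟨S₂, hS₂, hcard₂⟩ := hS.exists_two_periods hper
  have hUU := (hS₂.compOp htwo hper hbal true).card_le_maxBRD_succ
  have hDD := (hS₂.compOp htwo hper hbal false).card_le_maxBRD_succ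
  have hsplit := card_add_one_le_card_image_add_card_image (u := hitCount true true r)
    (d := hitCount false false r) (Nat.count_monotone _) (Nat.count_monotone _)
    (fun a b hab => by simpa only [hitCount_true_add_hitCount_false htwo] using hab) ⟨0, hS₂.1⟩
  have hmax : 2 * maxBRD r p ≤ maxBRD (UUop r) p + maxBRD (DDop r) p := by
    unfold UUop DDop
    omega
  rw [balCoeff, balCoeff, balCoeff, ← add_div, mul_div_assoc']
  exact div_le_div_of_nonneg_right (by exact_mod_cast hmax) (Nat.cast_nonneg p)
end

section
/- If r is a BURD rotor (a balanced two-state rotor type having a BRD and a URD of the same type), then UD(r) ≡ r and DU(r) ≡ r. -/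
open scoped Classical

namespace S12aux

lemma countIn_succ (f : ℕ → ℕ) (n v : ℕ) :
    countIn f (n+1) v = countIn f n v + if f n = v then 1 else 0 := by
  unfold countIn
  rw [Finset.range_add_one, Finset.filter_insert]
  by_cases h : f n = v
  · rw [if_pos h, if_pos h, Finset.card_insert_of_notMem (by simp)]
  · rw [if_neg h, if_neg h, add_zero]

lemma countIn_add (f : ℕ → ℕ) (a n v : ℕ) :
    countIn f (a + n) v = countIn f a v + countIn (fun x => f (a + x)) n v := by
  induction n with
  | zero => simp [countIn]
  | succ n ih =>
    rw [← Nat.add_assoc, countIn_succ, ih, countIn_succ]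
    simp [Nat.add_assoc]

lemma countIn_two_sum (f : ℕ → ℕ) (h : ∀ k, f k = 1 ∨ f k = 2) (n : ℕ) :
    countIn f n 1 + countIn f n 2 = n := by
  induction n with
  | zero => simp [countIn]
  | succ n ih =>
    rw [countIn_succ, countIn_succ]
    rcases h n with h1 | h1 <;> simp [h1] <;> omega

lemma countIn_eq_count (f : ℕ → ℕ) (n v : ℕ) :
    countIn f n v = Nat.count (fun k => f k = v) n := by
  rw [Nat.count_eq_card_filter_range]; rfl

/-- partial sums -/
def psum (g : ℕ → ℕ) : ℕ → ℕ
  | 0 => 0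
  | i+1 => psum g i + g i

lemma psum_congr (g g' : ℕ → ℕ) (h : ∀ k, g k = g' k) (n : ℕ) : psum g n = psum g' n := by
  have : g = g' := funext h
  rw [this]

lemma psum_add (g : ℕ → ℕ) (a n : ℕ) :
    psum g (a + n) = psum g a + psum (fun x => g (a + x)) n := by
  induction n with
  | zero => simp [psum]
  | succ n ih => rw [← Nat.add_assoc]; simp [psum, ih]; omega

lemma psum_typeSeq_take (l : List ℕ) : ∀ i, i ≤ l.length →
    psum (typeSeq l) i = (l.take i).sum := by
  intro i
  induction i with
  | zero => intro _; simp [psum]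
  | succ i ih =>
    intro h
    have hi : i < l.length := h
    rw [List.sum_take_succ l i hi]
    show psum (typeSeq l) i + typeSeq l i = _
    rw [ih (le_of_lt hi)]
    congr 1
    show l.getD (i % l.length) 0 = _
    rw [Nat.mod_eq_of_lt hi, List.getD_eq_getElem l 0 hi]

lemma typeSeq_period (l : List ℕ) (i : ℕ) : typeSeq l (i + l.length) = typeSeq l i := by
  show l.getD ((i + l.length) % l.length) 0 = l.getD (i % l.length) 0
  rw [Nat.add_mod_right]

lemma typeSeq_mem (l : List ℕ) (hne : l ≠ []) (i : ℕ) : typeSeq l i ∈ l := by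
  have hlen : 0 < l.length := List.length_pos_iff.mpr hne
  have h : i % l.length < l.length := Nat.mod_lt _ hlen
  show l.getD (i % l.length) 0 ∈ l
  rw [List.getD_eq_getElem l 0 h]
  exact List.getElem_mem h


lemma countIn_mono (f : ℕ → ℕ) (v : ℕ) {a b : ℕ} (h : a ≤ b) :
    countIn f a v ≤ countIn f b v := by
  unfold countIn
  apply Finset.card_le_card
  apply Finset.filter_subset_filter
  exact Finset.range_subset_range.mpr h

lemma le_nth_of_count_le {P : ℕ → Prop} (hinf : (setOf P).Infinite) {n k : ℕ}
    (h : Nat.count P n ≤ k) : n ≤ Nat.nth P k := by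
  by_contra hc
  push_neg at hc
  have h1 : Nat.count P (Nat.nth P k + 1) ≤ Nat.count P n := Nat.count_monotone _ hc
  rw [Nat.count_nth_succ_of_infinite hinf] at h1
  omega

lemma infinite_setOf_periodic {f : ℕ → ℕ} {p v k0 : ℕ} (hp : 0 < p)
    (hper : ∀ k, f (k + p) = f k) (h0 : f k0 = v) : {k | f k = v}.Infinite := by
  have hmem : ∀ n, f (k0 + n * p) = v := by
    intro n
    induction n with
    | zero => simpa using h0
    | succ n ih => rw [Nat.succ_mul, ← Nat.add_assoc, hper]; exact ih
  apply Set.infinite_of_injective_forall_mem (f := fun n : ℕ => k0 + n * p)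
    (hi := by intro a b hab; simp only at hab; exact Nat.eq_of_mul_eq_mul_right hp (by omega))
  intro n; exact hmem n

lemma nth_eq_of_strictMono_enum {f : ℕ → ℕ} (hf : StrictMono f) {P : ℕ → Prop}
    (hP : ∀ t, P t ↔ ∃ m, f m = t) (k : ℕ) : Nat.nth P k = f k := by
  have hc : Nat.count P (f k) = k := by
    rw [Nat.count_eq_card_filter_range]
    have he : (Finset.range (f k)).filter P = (Finset.range k).image f := by
      ext t
      simp only [Finset.mem_filter, Finset.mem_range, Finset.mem_image, hP]
      constructor
      · rintro ⟨ht, m, rfl⟩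
        exact ⟨m, hf.lt_iff_lt.mp ht, rfl⟩
      · rintro ⟨m, hm, rfl⟩
        exact ⟨hf hm, m, rfl⟩
    rw [he, Finset.card_image_of_injective _ hf.injective, Finset.card_range]
  have := Nat.nth_count (p := P) ((hP (f k)).2 ⟨k, rfl⟩)
  rw [hc] at this
  exact this

lemma exists_interval {T : ℕ → ℕ} (h0 : T 0 = 0) (hstep : ∀ i, T i < T (i+1)) (m : ℕ) :
    ∃ i, T i ≤ m ∧ m < T (i+1) := by
  induction m with
  | zero => exact ⟨0, by omega, by have := hstep 0; omega⟩
  | succ m ih =>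
    obtain ⟨i, h1, h2⟩ := ih
    by_cases hc : m + 1 < T (i+1)
    · exact ⟨i, by omega, hc⟩
    · exact ⟨i+1, by omega, by have := hstep (i+1); omega⟩

end S12aux

/-- If `r` is a BURD rotor (a balanced two-state rotor type with a BRD
and a URD of the same type), then `UD(r) ≡ r` and `DU(r) ≡ r`. -/
theorem statement12 (r : ℕ → ℕ) (p : ℕ) (h2 : TwoState r) (hmin : IsMinimalPeriod r p)
    (hbal : countIn r p 1 = countIn r p 2) (hburd : IsBURD r p) :
    SeqEquiv (UDseq r) r ∧ SeqEquiv (DUseq r) r := by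
    classical
  obtain ⟨hpos, hper, -⟩ := hmin
  obtain ⟨h12, ⟨k1, hk1⟩, ⟨k2, hk2⟩⟩ := h2
  -- basic counting facts
  have hFG : ∀ t, countIn r t 1 + countIn r t 2 = t := S12aux.countIn_two_sum r h12
  have hshift : (fun k => r (p + k)) = r := funext fun k => by rw [Nat.add_comm]; exact hper k
  have hcper : ∀ v x, countIn r (p + x) v = countIn r p v + countIn r x v := by
    intro v x
    rw [S12aux.countIn_add, hshift]
  have hbal2 : countIn r p 1 + countIn r p 1 = p := by
    have := hFG p; omega
  -- structure from BURD
  unfold IsBURD at hburd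
  obtain ⟨L, M, hL, hM, htype⟩ := hburd
  unfold IsBRD at hL
  unfold IsURD at hM
  obtain ⟨hLsum, hLpos, hLbal⟩ := hL
  obtain ⟨hMsum, hMpos, hMconst⟩ := hM
  have hMne : M ≠ [] := by
    intro h; rw [h] at hMsum; simp at hMsum; omega
  have hLne : L ≠ [] := by
    intro h; rw [h] at hLsum; simp at hLsum; omega
  have hlm : 0 < M.length := List.length_pos_iff.mpr hMne
  have hll : 0 < L.length := List.length_pos_iff.mpr hLne
  set T := S12aux.psum (typeSeq M) with hTdef
  set U := S12aux.psum (typeSeq L) with hUdef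
  have hUT : ∀ i, U i = 2 * T i := by
    intro i
    induction i with
    | zero => rfl
    | succ i ih =>
      show U i + typeSeq L i = 2 * (T i + typeSeq M i)
      rw [ih, htype i]; ring
  have hTstep : ∀ i, T i < T (i + 1) := by
    intro i
    have h1 : 0 < typeSeq M i := hMpos _ (S12aux.typeSeq_mem M hMne i)
    show T i < T i + typeSeq M i
    omega
  have hTper : ∀ i, T (i + M.length) = T i + p := by
    intro i
    rw [Nat.add_comm i M.length, hTdef, S12aux.psum_add]
    have h1 : S12aux.psum (typeSeq M) M.length = p := by
      rw [S12aux.psum_typeSeq_take M M.length (le_refl _)]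
      simpa using hMsum
    have h2 : S12aux.psum (fun x => typeSeq M (M.length + x)) i = S12aux.psum (typeSeq M) i := by
      apply S12aux.psum_congr
      intro k
      rw [Nat.add_comm M.length k]
      exact S12aux.typeSeq_period M k
    rw [h1, h2]; ring
  have hUper : ∀ i, U (i + L.length) = U i + p := by
    intro i
    rw [Nat.add_comm i L.length, hUdef, S12aux.psum_add]
    have h1 : S12aux.psum (typeSeq L) L.length = p := by
      rw [S12aux.psum_typeSeq_take L L.length (le_refl _)]
      simpa using hLsum
    have h2 : S12aux.psum (fun x => typeSeq L (L.length + x)) i = S12aux.psum (typeSeq L) i := by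
      apply S12aux.psum_congr
      intro k
      rw [Nat.add_comm L.length k]
      exact S12aux.typeSeq_period L k
    rw [h1, h2]; ring
  -- balanced prefix counts at BRD boundaries
  have hbase : ∀ i, i ≤ L.length → 2 * countIn r (U i) 1 = U i := by
    intro i
    induction i with
    | zero => intro _; show 2 * countIn r 0 1 = 0; simp [countIn]
    | succ i ih =>
      intro h
      have hi : i < L.length := h
      have hUi : U i = (L.take i).sum := S12aux.psum_typeSeq_take L i (le_of_lt hi)
      have hgt : typeSeq L i = L.get ⟨i, hi⟩ := by
        show L.getD (i % L.length) 0 = _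
        rw [Nat.mod_eq_of_lt hi, List.getD_eq_getElem L 0 hi]; simp
      have hUsucc : U (i+1) = U i + typeSeq L i := rfl
      have hb := hLbal ⟨i, hi⟩
      simp only at hb
      rw [← hUi, ← hgt] at hb
      have hts : countIn (fun j => r (U i + j)) (typeSeq L i) 1 +
          countIn (fun j => r (U i + j)) (typeSeq L i) 2 = typeSeq L i :=
        S12aux.countIn_two_sum _ (fun k => h12 (U i + k)) _
      have hadd : countIn r (U i + typeSeq L i) 1 =
          countIn r (U i) 1 + countIn (fun x => r (U i + x)) (typeSeq L i) 1 :=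
        S12aux.countIn_add r (U i) (typeSeq L i) 1
      have hih := ih (le_of_lt hi)
      rw [hUsucc, hadd]
      omega
  have hF2U : ∀ i, 2 * countIn r (U i) 1 = U i := by
    intro i
    induction i using Nat.strong_induction_on with
    | _ i ih =>
      by_cases h : i ≤ L.length
      · exact hbase i h
      · have hj : i - L.length < i := by omega
        have hji : i = (i - L.length) + L.length := by omega
        have := ih (i - L.length) hj
        rw [hji, hUper, Nat.add_comm (U (i - L.length)) p, hcper]
        omega
  have hF2T : ∀ i, 2 * countIn r (2 * T i) 1 = 2 * T i := by
    intro i; rw [← hUT i]; exact hF2U i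
  -- runs constancy, extended periodically
  have hconst : ∀ i, ∀ x < typeSeq M i, r (T i + x) = r (T i) := by
    intro i
    induction i using Nat.strong_induction_on with
    | _ i ih =>
      by_cases h : i < M.length
      · intro x hx
        have hTi : T i = (M.take i).sum := S12aux.psum_typeSeq_take M i (le_of_lt h)
        have hgt : typeSeq M i = M.get ⟨i, h⟩ := by
          show M.getD (i % M.length) 0 = _
          rw [Nat.mod_eq_of_lt h, List.getD_eq_getElem M 0 h]; simp
        have := hMconst ⟨i, h⟩ x (by rw [← hgt]; exact hx)
        simp only at this
        rw [← hTi] at this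
        exact this
      · push_neg at h
        intro x hx
        have hj : i - M.length < i := by omega
        have hji : i = (i - M.length) + M.length := by omega
        have hx' : x < typeSeq M (i - M.length) := by
          rw [hji, S12aux.typeSeq_period] at hx; exact hx
        have h1 : T i = T (i - M.length) + p := by
          conv_lhs => rw [hji]
          exact hTper _
        have h2 : r (T (i - M.length) + x + p) = r (T (i - M.length) + x) := hper _
        have h3 : r (T (i - M.length) + p) = r (T (i - M.length)) := hper _
        rw [h1]
        calc r (T (i - M.length) + p + x) = r (T (i - M.length) + x + p) := by ring_nf
          _ = r (T (i - M.length) + x) := h2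
          _ = r (T (i - M.length)) := ih _ hj x hx'
          _ = r (T (i - M.length) + p) := h3.symm
  -- switches happen only at extended run boundaries
  have hswitch : ∀ m, r m ≠ r (m + 1) → ∃ i, m + 1 = T i := by
    intro m hne
    obtain ⟨i, h1, h2⟩ := S12aux.exists_interval (T := T) rfl hTstep m
    by_cases hc : m + 1 < T (i + 1)
    · exfalso
      have hTsucc : T (i+1) = T i + typeSeq M i := rfl
      have e1 : r m = r (T i) := by
        have := hconst i (m - T i) (by omega)
        rw [show T i + (m - T i) = m by omega] at this
        exact this
      have e2 : r (m + 1) = r (T i) := by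
        have := hconst i (m + 1 - T i) (by omega)
        rw [show T i + (m + 1 - T i) = m + 1 by omega] at this
        exact this
      exact hne (e1.trans e2.symm)
    · exact ⟨i + 1, by omega⟩
  -- boundary counts
  have hbound : ∀ m, r m ≠ r (m + 1) →
      countIn r (2 * (m+1)) 1 = m + 1 ∧ countIn r (2 * (m+1)) 2 = m + 1 := by
    intro m hne
    obtain ⟨i, hi⟩ := hswitch m hne
    have h1 := hF2T i
    rw [← hi] at h1
    have h2 := hFG (2 * (m+1))
    omega
  -- nth machinery
  have hinf1 : {k | r k = 1}.Infinite := S12aux.infinite_setOf_periodic hpos hper hk1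
  have hinf2 : {k | r k = 2}.Infinite := S12aux.infinite_setOf_periodic hpos hper hk2
  set na := Nat.nth (fun k => r k = 1) with hna_def
  set nb := Nat.nth (fun k => r k = 2) with hnb_def
  have hna_mem : ∀ m, r (na m) = 1 := fun m => Nat.nth_mem_of_infinite hinf1 m
  have hnb_mem : ∀ m, r (nb m) = 2 := fun m => Nat.nth_mem_of_infinite hinf2 m
  have hna_count : ∀ m, countIn r (na m) 1 = m := by
    intro m; rw [S12aux.countIn_eq_count]; exact Nat.count_nth_of_infinite hinf1 m
  have hnb_count : ∀ m, countIn r (nb m) 2 = m := by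
    intro m; rw [S12aux.countIn_eq_count]; exact Nat.count_nth_of_infinite hinf2 m
  have hna_nth_count : ∀ t, r t = 1 → na (countIn r t 1) = t := by
    intro t ht; rw [S12aux.countIn_eq_count]; exact Nat.nth_count ht
  have hnb_nth_count : ∀ t, r t = 2 → nb (countIn r t 2) = t := by
    intro t ht; rw [S12aux.countIn_eq_count]; exact Nat.nth_count ht
  have hsucc1 : ∀ m, countIn r (na m + 1) 1 = m + 1 := by
    intro m
    rw [S12aux.countIn_succ, hna_count m, if_pos (hna_mem m)]
  have hsucc2 : ∀ m, countIn r (nb m + 1) 2 = m + 1 := by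
    intro m
    rw [S12aux.countIn_succ, hnb_count m, if_pos (hnb_mem m)]
  have hna_lt : ∀ m e, m < countIn r e 1 → na m < e := by
    intro m e h
    by_contra hc
    push_neg at hc
    have := S12aux.countIn_mono r 1 hc
    rw [hna_count m] at this
    omega
  have hnb_lt : ∀ m e, m < countIn r e 2 → nb m < e := by
    intro m e h
    by_contra hc
    push_neg at hc
    have := S12aux.countIn_mono r 2 hc
    rw [hnb_count m] at this
    omega
  have hna_ge : ∀ m e, countIn r e 1 ≤ m → e ≤ na m := by
    intro m e h
    by_contra hc
    push_neg at hc
    have h2 : na m + 1 ≤ e := hc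
    have := S12aux.countIn_mono r 1 h2
    rw [hsucc1 m] at this
    omega
  have hnb_ge : ∀ m e, countIn r e 2 ≤ m → e ≤ nb m := by
    intro m e h
    by_contra hc
    push_neg at hc
    have h2 : nb m + 1 ≤ e := hc
    have := S12aux.countIn_mono r 2 h2
    rw [hsucc2 m] at this
    omega
  have hna_mono : StrictMono na := Nat.nth_strictMono hinf1
  have hnb_mono : StrictMono nb := Nat.nth_strictMono hinf2
  -- the two enumerations
  set Ts := fun m => if r m = 1 then na m else nb m with hTs_def
  set Us := fun m => if r m = 1 then nb m else na m with hUs_def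
  have hTs_app : ∀ m, Ts m = if r m = 1 then na m else nb m := fun m => rfl
  have hUs_app : ∀ m, Us m = if r m = 1 then nb m else na m := fun m => rfl
  have hTsMono : StrictMono Ts := by
    apply strictMono_nat_of_lt_succ
    intro m
    by_cases heq : r m = r (m + 1)
    · rw [hTs_app, hTs_app, ← heq]
      by_cases h1 : r m = 1
      · simp only [if_pos h1]; exact hna_mono (Nat.lt_succ_self m)
      · simp only [if_neg h1]; exact hnb_mono (Nat.lt_succ_self m)
    · obtain ⟨hc1, hc2⟩ := hbound m heq
      have hlt : Ts m < 2 * (m + 1) := by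
        rw [hTs_app]
        by_cases h1 : r m = 1
        · simp only [if_pos h1]; exact hna_lt m _ (by omega)
        · simp only [if_neg h1]; exact hnb_lt m _ (by omega)
      have hge : 2 * (m + 1) ≤ Ts (m + 1) := by
        rw [hTs_app]
        by_cases h1 : r (m+1) = 1
        · simp only [if_pos h1]; exact hna_ge (m+1) _ (by omega)
        · simp only [if_neg h1]; exact hnb_ge (m+1) _ (by omega)
      omega
  have hUsMono : StrictMono Us := by
    apply strictMono_nat_of_lt_succ
    intro m
    by_cases heq : r m = r (m + 1)
    · rw [hUs_app, hUs_app, ← heq]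
      by_cases h1 : r m = 1
      · simp only [if_pos h1]; exact hnb_mono (Nat.lt_succ_self m)
      · simp only [if_neg h1]; exact hna_mono (Nat.lt_succ_self m)
    · obtain ⟨hc1, hc2⟩ := hbound m heq
      have hlt : Us m < 2 * (m + 1) := by
        rw [hUs_app]
        by_cases h1 : r m = 1
        · simp only [if_pos h1]; exact hnb_lt m _ (by omega)
        · simp only [if_neg h1]; exact hna_lt m _ (by omega)
      have hge : 2 * (m + 1) ≤ Us (m + 1) := by
        rw [hUs_app]
        by_cases h1 : r (m+1) = 1
        · simp only [if_pos h1]; exact hnb_ge (m+1) _ (by omega)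
        · simp only [if_neg h1]; exact hna_ge (m+1) _ (by omega)
      omega
  -- two-state dichotomy helper
  have hval2 : ∀ t, r t ≠ 1 → r t = 2 := by
    intro t h; rcases h12 t with h' | h'; exact absurd h' h; exact h'
  -- DU analysis
  have hDU_iff : ∀ t, (hitAt false true r t).isSome = true ↔ ∃ m, Ts m = t := by
    intro t
    by_cases h1 : r t = 1
    · by_cases h2 : r (countIn r t 1) = 1
      · simp only [hitAt, if_pos h1]
        rw [if_pos (by simp [h2])]
        simp only [Option.isSome_some, true_iff]
        refine ⟨countIn r t 1, ?_⟩
        rw [hTs_app, if_pos h2]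
        exact hna_nth_count t h1
      · constructor
        · intro hs
          exfalso
          simp only [hitAt, if_pos h1] at hs
          rw [if_neg (by simp [h2])] at hs
          simp at hs
        · rintro ⟨m, hm⟩
          exfalso
          rw [hTs_app] at hm
          by_cases h3 : r m = 1
          · rw [if_pos h3] at hm
            rw [← hm, hna_count] at h2
            exact h2 h3
          · rw [if_neg h3] at hm
            rw [← hm, hnb_mem m] at h1
            exact absurd h1 (by omega)
    · have h1' : r t = 2 := hval2 t h1
      by_cases h2 : r (countIn r t 2) = 1
      · constructor
        · intro hs
          exfalso
          simp only [hitAt, if_neg h1] at hs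
          rw [if_neg (by simp [h2])] at hs
          simp at hs
        · rintro ⟨m, hm⟩
          exfalso
          rw [hTs_app] at hm
          by_cases h3 : r m = 1
          · rw [if_pos h3] at hm
            rw [← hm, hna_mem m] at h1
            exact h1 rfl
          · rw [if_neg h3] at hm
            rw [← hm, hnb_count] at h2
            exact h3 h2
      · simp only [hitAt, if_neg h1]
        rw [if_pos (by simp [h2])]
        simp only [Option.isSome_some, true_iff]
        refine ⟨countIn r t 2, ?_⟩
        rw [hTs_app, if_neg h2]
        exact hnb_nth_count t h1'
  have hDU_val : ∀ k, hitAt false true r (Ts k) = some (r k + 3) := by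
    intro k
    by_cases h3 : r k = 1
    · have ht : Ts k = na k := by rw [hTs_app, if_pos h3]
      rw [ht, h3]
      have e1 : r (na k) = 1 := hna_mem k
      have e2 : r (countIn r (na k) 1) = 1 := by rw [hna_count k]; exact h3
      simp only [hitAt, if_pos e1]
      rw [if_pos (by simp [e2])]
    · have h3' : r k = 2 := hval2 k h3
      have ht : Ts k = nb k := by rw [hTs_app, if_neg h3]
      rw [ht, h3']
      have e1 : r (nb k) = 2 := hnb_mem k
      have e1' : ¬ (r (nb k) = 1) := by omega
      have e2 : ¬ (r (countIn r (nb k) 2) = 1) := by rw [hnb_count k]; omega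
      simp only [hitAt, if_neg e1']
      rw [if_pos (by simp [e2])]
  -- UD analysis
  have hUD_iff : ∀ t, (hitAt true false r t).isSome = true ↔ ∃ m, Us m = t := by
    intro t
    by_cases h1 : r t = 1
    · by_cases h2 : r (countIn r t 1) = 1
      · constructor
        · intro hs
          exfalso
          simp only [hitAt, if_pos h1] at hs
          rw [if_neg (by simp [h2])] at hs
          simp at hs
        · rintro ⟨m, hm⟩
          exfalso
          rw [hUs_app] at hm
          by_cases h3 : r m = 1
          · rw [if_pos h3] at hm
            rw [← hm, hnb_mem m] at h1
            exact absurd h1 (by omega)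
          · rw [if_neg h3] at hm
            rw [← hm, hna_count] at h2
            exact h3 h2
      · simp only [hitAt, if_pos h1]
        rw [if_pos (by simp [h2])]
        simp only [Option.isSome_some, true_iff]
        refine ⟨countIn r t 1, ?_⟩
        rw [hUs_app, if_neg h2]
        exact hna_nth_count t h1
    · have h1' : r t = 2 := hval2 t h1
      by_cases h2 : r (countIn r t 2) = 1
      · simp only [hitAt, if_neg h1]
        rw [if_pos (by simp [h2])]
        simp only [Option.isSome_some, true_iff]
        refine ⟨countIn r t 2, ?_⟩
        rw [hUs_app, if_pos h2]
        exact hnb_nth_count t h1'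
      · constructor
        · intro hs
          exfalso
          simp only [hitAt, if_neg h1] at hs
          rw [if_neg (by simp [h2])] at hs
          simp at hs
        · rintro ⟨m, hm⟩
          exfalso
          rw [hUs_app] at hm
          by_cases h3 : r m = 1
          · rw [if_pos h3] at hm
            rw [← hm, hnb_count] at h2
            exact h2 h3
          · rw [if_neg h3] at hm
            rw [← hm, hna_mem m] at h1
            exact h1 rfl
  have hUD_val : ∀ k, hitAt true false r (Us k) = some (if r k = 1 then 5 else 4) := by
    intro k
    by_cases h3 : r k = 1
    · have ht : Us k = nb k := by rw [hUs_app, if_pos h3]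
      rw [ht, if_pos h3]
      have e1 : r (nb k) = 2 := hnb_mem k
      have e1' : ¬ (r (nb k) = 1) := by omega
      have e2 : r (countIn r (nb k) 2) = 1 := by rw [hnb_count k]; exact h3
      simp only [hitAt, if_neg e1']
      rw [if_pos (by simp [e2])]
    · have h3' : r k = 2 := hval2 k h3
      have ht : Us k = na k := by rw [hUs_app, if_neg h3]
      rw [ht, if_neg h3]
      have e1 : r (na k) = 1 := hna_mem k
      have e2 : ¬ (r (countIn r (na k) 1) = 1) := by rw [hna_count k]; omega
      simp only [hitAt, if_pos e1]
      rw [if_pos (by simp [e2])]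
  -- assemble
  have hDUseq : ∀ k, DUseq r k = r k + 3 := by
    intro k
    show (hitAt false true r (Nat.nth (fun t => (hitAt false true r t).isSome = true) k)).getD 4
        = r k + 3
    rw [S12aux.nth_eq_of_strictMono_enum hTsMono hDU_iff k, hDU_val k]
    rfl
  have hUDseq : ∀ k, UDseq r k = if r k = 1 then 5 else 4 := by
    intro k
    show (hitAt true false r (Nat.nth (fun t => (hitAt true false r t).isSome = true) k)).getD 4
        = if r k = 1 then 5 else 4
    rw [S12aux.nth_eq_of_strictMono_enum hUsMono hUD_iff k, hUD_val k]
    rfl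
  constructor
  · refine ⟨fun x => if x = 5 then 1 else 2, ?_, ?_⟩
    · intro k
      show (if UDseq r k = 5 then 1 else 2) = r k
      rw [hUDseq k]
      by_cases h3 : r k = 1
      · rw [if_pos h3, if_pos rfl, h3]
      · rw [if_neg h3, if_neg (by omega), hval2 k h3]
    · intro k l hkl
      replace hkl : (if UDseq r k = 5 then 1 else 2) = (if UDseq r l = 5 then 1 else 2) := hkl
      rw [hUDseq k, hUDseq l] at *
      by_cases h3 : r k = 1 <;> by_cases h4 : r l = 1 <;>
        simp [h3, h4] at hkl ⊢
  · refine ⟨fun x => x - 3, ?_, ?_⟩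
    · intro k
      show DUseq r k - 3 = r k
      rw [hDUseq k]
      omega
    · intro k l hkl
      replace hkl : DUseq r k - 3 = DUseq r l - 3 := hkl
      rw [hDUseq k, hDUseq l] at *
      omega
end

section
/- Let r be a balanced two-state rotor type with period 2n. Then for every m ≥ 1, the position of the m-th occurrence of target 4 in the infinite hitting sequence UD(r) equals F(G(f(g(m)))) + m. -/
open scoped Classical

/-! The source fires `r` itself, so its `t`-th firing (0-based) ends in a hit of `4` exactly
when `r t = 1` and the `F(t)`-th firing of `v2` is a `2`, and in a hit of `5` exactly when
`r t = 2` and the `G(t)`-th firing of `v3` is a `1`.  Hence the `m`-th hit of `4` comes from the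
firing `t = f(g(m)) - 1`, and the hits of `5` before it correspond, via `s ↦ G(s)`, to the
`1`'s among the first `G(t)` terms of `r`: there are `F(G(t))` of them. -/

namespace Nat

theorem count_congr {p q : ℕ → Prop} [DecidablePred p] [DecidablePred q]
    (h : ∀ k, p k ↔ q k) (n : ℕ) : count p n = count q n := by
  simp only [count_eq_card_filter_range, h]

theorem count_or_of_disjoint {p q : ℕ → Prop} [DecidablePred p] [DecidablePred q]
    (h : ∀ k, p k → ¬q k) (n : ℕ) :
    count (fun k => p k ∨ q k) n = count p n + count q n := by
  induction n with
  | zero => simp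
  | succ n ih =>
    simp only [count_succ, ih]
    by_cases hp : p n <;> by_cases hq : q n <;> simp_all <;> omega

theorem count_comp_nth (p s : ℕ → Prop) [DecidablePred p] [DecidablePred s] (n : ℕ) :
    count (fun k => s (nth p k)) (count p n) = count (fun k => p k ∧ s k) n := by
  induction n with
  | zero => simp
  | succ n ih =>
    by_cases hp : p n
    · simp [count_succ, ih, hp, nth_count hp]
    · simp [count_succ, ih, hp]

theorem count_and_comp_count (p s : ℕ → Prop) [DecidablePred p] [DecidablePred s] (n : ℕ) :
    count (fun k => p k ∧ s (count p k)) n = count s (count p n) := by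
  induction n with
  | zero => simp
  | succ n ih =>
    by_cases hp : p n
    · simp [count_succ, ih, hp]
    · simp [count_succ, ih, hp]

/-- Among the elements of `T`, enumerated by `nth T`, those in `P ⊆ T` are enumerated by
`count T ∘ nth P`. -/
theorem nth_eq_count_of_subset {T P : ℕ → Prop} [DecidablePred T] [DecidablePred P]
    {Q : ℕ → Prop} (hQ : ∀ k, Q k ↔ P (nth T k)) (hPT : ∀ t, P t → T t) {t : ℕ} (ht : P t) :
    nth Q (count P t) = count T t := by
  obtain rfl : Q = fun k => P (nth T k) := funext fun k => propext (hQ k)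
  have hcount : count (fun k => P (nth T k)) (count T t) = count P t := by
    rw [count_comp_nth]
    exact count_congr (fun k => and_iff_right_of_imp (hPT k)) t
  rw [← hcount]
  exact nth_count (by rwa [nth_count (hPT t ht)])

end Nat

theorem Function.Periodic.infinite_setOf_eq {α : Type*} {f : ℕ → α} {c : ℕ}
    (hf : Function.Periodic f c) (hc : 0 < c) (k : ℕ) : {j | f j = f k}.Infinite :=
  Set.infinite_of_injective_forall_mem (f := fun i => k + i * c)
    (fun _ _ h => Nat.eq_of_mul_eq_mul_right hc (Nat.add_left_cancel h))
    (fun i => by simpa using hf.nat_mul i k)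

theorem countIn_eq_count (f : ℕ → ℕ) (n v : ℕ) :
    countIn f n v = Nat.count (fun k => f k = v) n := by
  rw [Nat.count_eq_card_filter_range, countIn]

def HitsFour (r : ℕ → ℕ) (t : ℕ) : Prop :=
  r t = 1 ∧ r (Nat.count (fun k => r k = 1) t) = 2

def HitsFive (r : ℕ → ℕ) (t : ℕ) : Prop :=
  r t = 2 ∧ r (Nat.count (fun k => r k = 2) t) = 1

instance (r : ℕ → ℕ) : DecidablePred (HitsFour r) := fun _ => instDecidableAnd

instance (r : ℕ → ℕ) : DecidablePred (HitsFive r) := fun _ => instDecidableAnd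

section UD

open Nat

variable {r : ℕ → ℕ}

theorem HitsFour.not_hitsFive {t : ℕ} (h : HitsFour r t) : ¬HitsFive r t :=
  fun h' => absurd (h.1.symm.trans h'.1) (by decide)

theorem count_hitsFour (t : ℕ) :
    count (HitsFour r) t = count (fun k => r k = 2) (count (fun k => r k = 1) t) :=
  count_and_comp_count (fun k => r k = 1) (fun k => r k = 2) t

theorem count_hitsFive (t : ℕ) :
    count (HitsFive r) t = count (fun k => r k = 1) (count (fun k => r k = 2) t) :=
  count_and_comp_count (fun k => r k = 2) (fun k => r k = 1) t

theorem hitsFour_nth (h1 : {k | r k = 1}.Infinite) {j : ℕ} (hj : r j = 2) :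
    HitsFour r (nth (fun k => r k = 1) j) :=
  ⟨nth_mem_of_infinite h1 j, by rwa [count_nth_of_infinite h1]⟩

theorem infinite_setOf_hitsFour (h1 : {k | r k = 1}.Infinite) (h2 : {k | r k = 2}.Infinite) :
    {t | HitsFour r t}.Infinite :=
  (h2.image (nth_injective h1).injOn).mono (by rintro _ ⟨j, hj, rfl⟩; exact hitsFour_nth h1 hj)

variable (hr : ∀ k, r k = 1 ∨ r k = 2)
include hr

theorem hitAt_UD_eq (t : ℕ) :
    hitAt true false r t =
      if HitsFour r t then some 4 else if HitsFive r t then some 5 else none := by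
  unfold hitAt HitsFour HitsFive
  rw [countIn_eq_count, countIn_eq_count]
  rcases hr t with ht | ht <;> rcases hr (count (fun k => r k = 1) t) with hF | hF <;>
    rcases hr (count (fun k => r k = 2) t) with hG | hG <;> simp [ht, hF, hG]

theorem isSome_hitAt_UD_iff (t : ℕ) :
    (hitAt true false r t).isSome ↔ HitsFour r t ∨ HitsFive r t := by
  rw [hitAt_UD_eq hr]
  split_ifs <;> simp_all

theorem UDseq_eq_four_iff (hT : {t | (hitAt true false r t).isSome = true}.Infinite) (k : ℕ) :
    UDseq r k = 4 ↔ HitsFour r (nth (fun t => (hitAt true false r t).isSome = true) k) := by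
  have hmem := (isSome_hitAt_UD_iff hr _).1 (nth_mem_of_infinite hT k)
  set t := nth (fun t => (hitAt true false r t).isSome = true) k
  change (hitAt true false r t).getD 4 = 4 ↔ _
  rw [hitAt_UD_eq hr t]
  by_cases h4 : HitsFour r t
  · simp [h4]
  · simp [h4, hmem.resolve_left h4]

end UD

theorem statement14_general (r : ℕ → ℕ) (n : ℕ) (h2 : TwoState r)
    (hmin : IsMinimalPeriod r (2 * n)) :
    ∀ m : ℕ, 1 ≤ m →
      Nat.nth (fun k => UDseq r k = 4) (m - 1) + 1 =
      countIn r (countIn r (posOf r 1 (posOf r 2 m)) 2) 1 + m := by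
  intro m hm
  obtain ⟨i, rfl⟩ : ∃ i, m = i + 1 := ⟨m - 1, by omega⟩
  obtain ⟨hr, ⟨k₁, hk₁⟩, ⟨k₂, hk₂⟩⟩ := h2
  have hper : Function.Periodic r (2 * n) := hmin.2.1
  have hinf₁ : {k | r k = 1}.Infinite := hk₁ ▸ hper.infinite_setOf_eq hmin.1 k₁
  have hinf₂ : {k | r k = 2}.Infinite := hk₂ ▸ hper.infinite_setOf_eq hmin.1 k₂
  have hFourHit : ∀ t, HitsFour r t → (hitAt true false r t).isSome :=
    fun t ht => (isSome_hitAt_UD_iff hr t).2 (Or.inl ht)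
  have hT := (infinite_setOf_hitsFour hinf₁ hinf₂).mono hFourHit
  set t := Nat.nth (fun k => r k = 1) (Nat.nth (fun k => r k = 2) i)
  have ht : HitsFour r t := hitsFour_nth hinf₁ (Nat.nth_mem_of_infinite hinf₂ i)
  have hcount : Nat.count (HitsFour r) t = i := by
    rw [count_hitsFour, Nat.count_nth_of_infinite hinf₁, Nat.count_nth_of_infinite hinf₂]
  have hnth : Nat.nth (fun k => UDseq r k = 4) i =
      Nat.count (fun t => (hitAt true false r t).isSome = true) t :=
    hcount ▸ Nat.nth_eq_count_of_subset (UDseq_eq_four_iff hr hT) hFourHit ht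
  have hsplit : Nat.count (fun t => (hitAt true false r t).isSome = true) t =
      i + Nat.count (fun k => r k = 1) (Nat.count (fun k => r k = 2) t) := by
    rw [Nat.count_congr (isSome_hitAt_UD_iff hr),
      Nat.count_or_of_disjoint (fun _ h => h.not_hitsFive), hcount, count_hitsFive]
  have hG : countIn r (posOf r 1 (posOf r 2 (i + 1))) 2 = Nat.count (fun k => r k = 2) t := by
    rw [posOf, posOf, add_tsub_cancel_right, add_tsub_cancel_right]
    change countIn r (t + 1) 2 = _
    rw [countIn_eq_count, Nat.count_succ, if_neg (by simp [ht.1]), add_zero]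
  rw [add_tsub_cancel_right, hnth, hsplit, hG, countIn_eq_count]
  omega

/-- For a balanced two-state rotor type `r` of period `2n`, the
(1-based) position of the `m`-th occurrence of target `4` in `UD(r)` equals
`F(G(f(g(m)))) + m`, where `f, g` give the positions of the `m`-th `1` and `2` in `r`,
and `F(m), G(m)` count the `1`'s and `2`'s among the first `m` terms of `r`. -/
theorem statement14 (r : ℕ → ℕ) (n : ℕ) (hn : 0 < n) (h2 : TwoState r)
    (hmin : IsMinimalPeriod r (2 * n))
    (hbal : countIn r (2 * n) 1 = countIn r (2 * n) 2) :
    ∀ m : ℕ, 1 ≤ m →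
      Nat.nth (fun k => UDseq r k = 4) (m - 1) + 1 =
      countIn r (countIn r (posOf r 1 (posOf r 2 m)) 2) 1 + m :=
  statement14_general r n h2 hmin
end
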